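/- arXiv:1505.06627 — 4 statements merged into one kernel-verified Lean document; each statement's English description precedes it below -/
import Mathlib

section
/- Let R be a commutative noetherian Poisson algebra over a field of characteristic zero, which is also a unique factorization domain, and let P be a nonzero Poisson prime ideal of height 1. Then P is principal, generated by a Poisson-normal element. -/
def IsPoissonBracket {R : Type*} [CommRing R] (B : R → R → R) : Prop :=
  (∀ a b c : R, B (a + b) c = B a c + B b c) ∧
  (∀ a b c : R, B a (b + c) = B a b + B a c) ∧
  (∀ a b : R, B a b = -B b a) ∧
  (∀ a b c : R, B a (B b c) + B b (B c a) + B c (B a b) = 0) ∧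
  (∀ a b c : R, B (a * b) c = a * B b c + b * B a c)

/-- in a noetherian Poisson UFD over a field of characteristic zero, a
nonzero Poisson prime ideal of height 1 is principal, generated by a Poisson-normal
element. -/
theorem height_one_poisson_prime_principal {k R : Type*} [Field k] [CharZero k]
    [CommRing R] [IsDomain R] [IsNoetherianRing R] [UniqueFactorizationMonoid R]
    [Algebra k R]
    (B : R → R → R) (hB : IsPoissonBracket B)
    (hBk : ∀ (c : k) (a b : R), B (c • a) b = c • B a b)
    (P : Ideal R) (hP : P.IsPrime) (hPne : P ≠ ⊥)
    (hPoisson : ∀ a ∈ P, ∀ r : R, B a r ∈ P)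
    (hheight : ∃ a : R, a ≠ 0 ∧ P ∈ (Ideal.span {a}).minimalPrimes) :
    ∃ f : R, (∀ r : R, ∃ s : R, B f r = f * s) ∧ P = Ideal.span {f} := by
  obtain ⟨a, ha, hmin⟩ := hheight
  have haP : a ∈ P := hmin.1.2 (Ideal.subset_span rfl)
  obtain ⟨fs, hfs, u, hfu⟩ := UniqueFactorizationMonoid.exists_prime_factors a ha
  have hprodP : fs.prod ∈ P := by
    have h1 : fs.prod * u * ↑u⁻¹ ∈ P := P.mul_mem_right _ (hfu ▸ haP)
    simpa [mul_assoc] using h1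
  obtain ⟨p, hpfs, hpP⟩ := (hP.multiset_prod_mem_iff_exists_mem fs).1 hprodP
  have hp : Prime p := hfs p hpfs
  have hpdvda : p ∣ a := dvd_trans (Multiset.dvd_prod hpfs) ⟨↑u, hfu.symm⟩
  have hspan_le : Ideal.span {a} ≤ Ideal.span {p} :=
    Ideal.span_singleton_le_span_singleton.2 hpdvda
  have hspanP : Ideal.span {p} ≤ P := (Ideal.span_singleton_le_iff_mem P).2 hpP
  have hPeq : P = Ideal.span {p} :=
    le_antisymm (hmin.2 ⟨(Ideal.span_singleton_prime hp.ne_zero).2 hp, hspan_le⟩ hspanP) hspanP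
  refine ⟨p, fun r => ?_, hPeq⟩
  have : B p r ∈ P := hPoisson p hpP r
  rw [hPeq, Ideal.mem_span_singleton] at this
  obtain ⟨s, hs⟩ := this
  exact ⟨s, hs⟩
end

section
/- Let T be a topological space with a finite stratification T = ⊔_{i ∈ Π} S_i indexed by a finite poset Π, and for i < j in Π define φ_{ij}: CL(S_i) → CL(S_j) by φ_{ij}(Y) = cl_T(Y) ∩ S_j (closure taken in T). Then a subset X ⊆ T is closed in T if and only if (a) X ∩ S_i is closed in S_i for all i ∈ Π, and (b) φ_{ij}(X ∩ S_i) ⊆ X ∩ S_j for all i < j in Π. -/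
/-- in a finitely stratified space, a subset `X` is closed iff each
trace `X ∩ S i` is closed in `S i` and `φ_{ij}(X ∩ S i) ⊆ X ∩ S j` for `i < j`,
where `φ_{ij}(Y) = cl_T(Y) ∩ S j`. -/
theorem closed_iff_strata_conditions {T ι : Type*} [TopologicalSpace T]
    [PartialOrder ι] [Fintype ι]
    (S : ι → Set T)
    (hne : ∀ i, (S i).Nonempty)
    (hdisj : Pairwise (Function.onFun Disjoint S))
    (hcover : (⋃ i, S i) = Set.univ)
    (hlc : ∀ i, IsLocallyClosed (S i))
    (hclos : ∀ i, closure (S i) = ⋃ j ∈ Set.Ici i, S j)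
    (X : Set T) :
    IsClosed X ↔
      ((∀ i, IsClosed (Subtype.val ⁻¹' X : Set (S i))) ∧
       (∀ i j, i < j → closure (X ∩ S i) ∩ S j ⊆ X ∩ S j)) := by
  constructor
  · intro hX
    refine ⟨fun i => hX.preimage continuous_subtype_val, fun i j hij x hx => ?_⟩
    exact ⟨closure_minimal Set.inter_subset_left hX hx.1, hx.2⟩
  · rintro ⟨ha, hb⟩
    have hXdec : X = ⋃ i, X ∩ S i := by
      rw [← Set.inter_iUnion, hcover, Set.inter_univ]
    refine isClosed_of_closure_subset fun x hx => ?_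
    rw [hXdec, closure_iUnion_of_finite] at hx
    obtain ⟨i, hxi⟩ := Set.mem_iUnion.mp hx
    -- x lies in some stratum j
    have hxU : x ∈ ⋃ j, S j := hcover ▸ Set.mem_univ x
    obtain ⟨j, hxj⟩ := Set.mem_iUnion.mp hxU
    -- x ∈ closure (S i), hence x ∈ S k for some k ≥ i; disjointness forces k = j
    have hxc : x ∈ closure (S i) := closure_mono Set.inter_subset_right hxi
    rw [hclos i] at hxc
    obtain ⟨k, hki, hxk⟩ := Set.mem_iUnion₂.mp hxc
    have hkj : k = j := by
      by_contra h
      exact (hdisj h).le_bot ⟨hxk, hxj⟩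
    have hij : i ≤ j := hkj ▸ hki
    rcases lt_or_eq_of_le hij with h | h
    · exact (hb i j h ⟨hxi, hxj⟩).1
    · subst h
      obtain ⟨C, hC, hCeq⟩ := isClosed_induced_iff.mp (ha i)
      have hXC : X ∩ S i = C ∩ S i := by
        ext t
        constructor
        · rintro ⟨htX, htS⟩
          have : (⟨t, htS⟩ : S i) ∈ (Subtype.val ⁻¹' X : Set (S i)) := htX
          rw [← hCeq] at this
          exact ⟨this, htS⟩
        · rintro ⟨htC, htS⟩
          have : (⟨t, htS⟩ : S i) ∈ (Subtype.val ⁻¹' C : Set (S i)) := htC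
          rw [hCeq] at this
          exact ⟨this, htS⟩
      have : x ∈ C := closure_minimal (hXC ▸ Set.inter_subset_left) hC hxi
      have : x ∈ C ∩ S i := ⟨this, hxj⟩
      rw [← hXC] at this
      exact this.1
end

section
/- Let P = k[y_1,…,y_n] be the Poisson algebra with {y_i,y_j} = a_{ij} y_i y_j for an additively antisymmetric integer matrix (a_{ij}), and for 0 ≤ r ≤ n let P^{r,n} = k[y_1^{±1},…,y_r^{±1},y_{r+1},…,y_n] be the localization inverting the first r variables. Then PZ(P^{r,n}) = PZ(P^{n,n}) ∩ P^{r,n}, where P^{n,n} is the Laurent polynomial Poisson algebra. -/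
open MvPolynomial

/-- for the quadratic Poisson bracket `{y_i,y_j} = a_{ij} y_i y_j` on
`P = k[y_1,…,y_n]`, the Poisson centre of `P^{r,n}` (first `r` variables inverted)
is the intersection of the Poisson centre of the Laurent polynomial Poisson algebra
`P^{n,n}` with `P^{r,n}`: an element of `P^{r,n}` is Poisson central there iff its
image in `P^{n,n}` is Poisson central. -/
theorem poisson_centre_partial_localization {k : Type*} [Field k] [CharZero k]
    {n : ℕ} (r : ℕ) (hr : r ≤ n)
    (a : Fin n → Fin n → ℤ) (hanti : ∀ i j, a j i = -a i j)
    (B : MvPolynomial (Fin n) k → MvPolynomial (Fin n) k → MvPolynomial (Fin n) k)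
    (hB : IsPoissonBracket B)
    (hBk : ∀ (c : k) (p q : MvPolynomial (Fin n) k), B (c • p) q = c • B p q)
    (hgen : ∀ i j, B (X i) (X j) = a i j • (X i * X j))
    (Mr Mn : Submonoid (MvPolynomial (Fin n) k))
    (hMr : Mr = Submonoid.closure {p | ∃ i : Fin n, (i : ℕ) < r ∧ p = X i})
    (hMn : Mn = Submonoid.closure (Set.range (X : Fin n → MvPolynomial (Fin n) k)))
    (hle : Mr ≤ Submonoid.comap (RingHom.id (MvPolynomial (Fin n) k)) Mn)
    (Br : Localization Mr → Localization Mr → Localization Mr)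
    (Bn : Localization Mn → Localization Mn → Localization Mn)
    (hBr : IsPoissonBracket Br) (hBn : IsPoissonBracket Bn)
    (hBrext : ∀ p q : MvPolynomial (Fin n) k,
      Br (algebraMap _ (Localization Mr) p) (algebraMap _ (Localization Mr) q) =
        algebraMap _ (Localization Mr) (B p q))
    (hBnext : ∀ p q : MvPolynomial (Fin n) k,
      Bn (algebraMap _ (Localization Mn) p) (algebraMap _ (Localization Mn) q) =
        algebraMap _ (Localization Mn) (B p q))
    (hcompat : ∀ x y : Localization Mr,
      IsLocalization.map (Localization Mn) (RingHom.id (MvPolynomial (Fin n) k)) hle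
          (Br x y) =
        Bn (IsLocalization.map (Localization Mn) (RingHom.id _) hle x)
          (IsLocalization.map (Localization Mn) (RingHom.id _) hle y)) :
    ∀ z : Localization Mr,
      (∀ s : Localization Mr, Br z s = 0) ↔
      (∀ t : Localization Mn,
        Bn (IsLocalization.map (Localization Mn) (RingHom.id _) hle z) t = 0) := by
  set φ := IsLocalization.map (S := Localization Mr) (Localization Mn) (RingHom.id (MvPolynomial (Fin n) k)) hle with hφ
  obtain ⟨_, _, hanti', _, hleib⟩ := hBn
  have hleib2 : ∀ x y w : Localization Mn, Bn x (y * w) = y * Bn x w + w * Bn x y := by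
    intro x y w
    rw [hanti' x (y * w), hleib, hanti' w x, hanti' y x]
    ring
  -- elements of Mn are nonzero
  have hMnne : ∀ m ∈ Mn, (m : MvPolynomial (Fin n) k) ≠ 0 := by
    intro m hm
    have h1 : eval (fun _ : Fin n => (1 : k)) m = 1 := by
      rw [hMn] at hm
      induction hm using Submonoid.closure_induction with
      | mem x hx => obtain ⟨i, rfl⟩ := hx; simp
      | one => simp
      | mul x y _ _ hx hy => simp [hx, hy]
    intro h0
    rw [h0] at h1
    simp at h1
  have hMnle : Mn ≤ nonZeroDivisors (MvPolynomial (Fin n) k) := fun m hm =>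
    mem_nonZeroDivisors_of_ne_zero (hMnne m hm)
  have halg_inj : Function.Injective (algebraMap (MvPolynomial (Fin n) k) (Localization Mn)) :=
    IsLocalization.injective _ hMnle
  have hφinj : ∀ x : Localization Mr, φ x = 0 → x = 0 := by
    intro x hx
    obtain ⟨⟨p, s⟩, rfl⟩ := IsLocalization.mk'_surjective Mr x
    rw [hφ, IsLocalization.map_mk'] at hx
    have hp : (RingHom.id (MvPolynomial (Fin n) k)) p = 0 := by
      have hu := IsLocalization.map_units (Localization Mn)
        (⟨(RingHom.id (MvPolynomial (Fin n) k)) s, hle s.2⟩ : Mn)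
      have hspec := IsLocalization.mk'_spec (Localization Mn)
        ((RingHom.id (MvPolynomial (Fin n) k)) p)
        (⟨(RingHom.id (MvPolynomial (Fin n) k)) s, hle s.2⟩ : Mn)
      rw [hx, zero_mul] at hspec
      have : algebraMap (MvPolynomial (Fin n) k) (Localization Mn)
          ((RingHom.id (MvPolynomial (Fin n) k)) p) = algebraMap _ _ (0 : MvPolynomial (Fin n) k) := by
        rw [map_zero]; exact hspec.symm
      exact halg_inj this
    simp only [RingHom.id_apply] at hp
    rw [hp]; exact IsLocalization.mk'_zero s
  intro z
  constructor
  · intro hz t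
    have hbase : ∀ p : MvPolynomial (Fin n) k,
        Bn (φ z) (algebraMap _ (Localization Mn) p) = 0 := by
      intro p
      have h := hcompat z (algebraMap _ (Localization Mr) p)
      rw [hz, map_zero] at h
      rw [hφ] at h ⊢
      rw [IsLocalization.map_eq] at h
      simp only [RingHom.id_apply] at h
      exact h.symm
    obtain ⟨⟨p, s⟩, rfl⟩ := IsLocalization.mk'_surjective Mn t
    have hspec := IsLocalization.mk'_spec (Localization Mn) p s
    have h0 : algebraMap _ (Localization Mn) (s : MvPolynomial (Fin n) k) *
        Bn (φ z) (IsLocalization.mk' (Localization Mn) p s) = 0 := by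
      have := hbase p
      rw [← hspec, hleib2] at this
      rw [hbase (s : MvPolynomial (Fin n) k)] at this
      rw [mul_zero, zero_add] at this
      exact this
    exact ((IsLocalization.map_units (Localization Mn) s).mul_right_eq_zero).mp h0
  · intro hw s
    apply hφinj
    rw [hcompat z s, hw]
end

section
/- Let R be a commutative Poisson algebra, M a maximal ideal of R, and define P(M) to be the sum of all Poisson ideals of R contained in M. Then P(M) is itself a Poisson ideal, it is the largest Poisson ideal contained in M, and if R is noetherian over a field of characteristic zero then P(M) is a (Poisson) prime ideal. -/
/-- Cancel a nonzero natural number (cast into a `k`-algebra, `k` of characteristic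
zero) from a product lying in an ideal. -/
lemma natCast_mul_mem_ideal_cancel (k : Type*) {R : Type*} [Field k] [CharZero k]
    [CommRing R] [Algebra k R] {I : Ideal R} {x : R} {n : ℕ} (hn : n ≠ 0)
    (h : (n : R) * x ∈ I) : x ∈ I := by
  have hk : ((n : k)) ≠ 0 := Nat.cast_ne_zero.mpr hn
  have hx : x = algebraMap k R ((n : k)⁻¹) * ((n : R) * x) := by
    rw [← mul_assoc, show ((n : R)) = algebraMap k R ((n : k)) from (map_natCast _ n).symm,
      ← map_mul, inv_mul_cancel₀ hk, map_one, one_mul]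
  rw [hx]
  exact I.mul_mem_left _ h

/-- In characteristic zero, the radical of an ideal stable under a derivation is
stable under that derivation. -/
lemma derivation_mem_radical (k : Type*) {R : Type*} [Field k] [CharZero k]
    [CommRing R] [Algebra k R] (D : Derivation k R R) (I : Ideal R)
    (hI : ∀ a ∈ I, D a ∈ I) : ∀ a ∈ I.radical, D a ∈ I.radical := by
  intro a ha
  obtain ⟨n, hn⟩ := Ideal.mem_radical_iff.mp ha
  cases n with
  | zero =>
      have hI1 : I = ⊤ := (Ideal.eq_top_iff_one I).mpr (by simpa using hn)
      exact Ideal.le_radical (hI1 ▸ Submodule.mem_top)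
  | succ m =>
      have key : ∀ j : ℕ, j ≤ m → a ^ (m - j) * D a ^ (2 * j + 1) ∈ I := by
        intro j
        induction j with
        | zero =>
            intro _
            have h1 : D (a ^ (m + 1)) ∈ I := hI _ hn
            rw [D.leibniz_pow] at h1
            simp only [Nat.add_sub_cancel, smul_eq_mul, nsmul_eq_mul] at h1
            have h2 := natCast_mul_mem_ideal_cancel k (Nat.succ_ne_zero m) h1
            simpa using h2
        | succ j ih =>
            intro hj1
            have hjm : j < m := hj1
            have hX : a ^ (m - j) * D a ^ (2 * j + 1) ∈ I := ih hjm.le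
            have hD : D (a ^ (m - j) * D a ^ (2 * j + 1)) ∈ I := hI _ hX
            obtain ⟨q, hq⟩ : ∃ q, m - j = q + 1 :=
              ⟨m - j - 1, by omega⟩
            have keyeq : ((m - j : ℕ) : R) * (a ^ (m - (j + 1)) * D a ^ (2 * (j + 1) + 1)) =
                D a * D (a ^ (m - j) * D a ^ (2 * j + 1)) -
                  ((2 * j + 1 : ℕ) : R) * ((a ^ (m - j) * D a ^ (2 * j + 1)) * D (D a)) := by
              have e1 : m - (j + 1) = q := by omega
              rw [D.leibniz, D.leibniz_pow, D.leibniz_pow, hq, e1]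
              simp only [Nat.add_sub_cancel, smul_eq_mul, nsmul_eq_mul]
              push_cast
              ring
            have hmem : ((m - j : ℕ) : R) * (a ^ (m - (j + 1)) * D a ^ (2 * (j + 1) + 1)) ∈ I := by
              rw [keyeq]
              exact sub_mem (I.mul_mem_left _ hD)
                (I.mul_mem_left _ (I.mul_mem_right _ hX))
            exact natCast_mul_mem_ideal_cancel k (by omega : m - j ≠ 0) hmem
      have hfin := key m le_rfl
      simp only [Nat.sub_self, pow_zero, one_mul] at hfin
      exact ⟨2 * m + 1, hfin⟩

/-- the Poisson core `P(M)` of a maximal ideal `M`, defined as the sum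
of all Poisson ideals contained in `M`, is itself a Poisson ideal, is the largest
Poisson ideal contained in `M`, and is prime when `R` is noetherian over a field of
characteristic zero. -/
theorem poisson_core_of_maximal_ideal {k R : Type*} [Field k] [CharZero k]
    [CommRing R] [Algebra k R]
    (B : R → R → R) (hB : IsPoissonBracket B)
    (hBk : ∀ (c : k) (a b : R), B (c • a) b = c • B a b)
    (M : Ideal R) (hM : M.IsMaximal) :
    ∀ C : Ideal R,
      C = sSup {I : Ideal R | (∀ a ∈ I, ∀ r : R, B a r ∈ I) ∧ I ≤ M} →
      ((∀ a ∈ C, ∀ r : R, B a r ∈ C) ∧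
       C ≤ M ∧
       (∀ I : Ideal R, (∀ a ∈ I, ∀ r : R, B a r ∈ I) → I ≤ M → I ≤ C) ∧
       (IsNoetherianRing R → C.IsPrime)) := by
  intro C hC
  set S := {I : Ideal R | (∀ a ∈ I, ∀ r : R, B a r ∈ I) ∧ I ≤ M} with hSdef
  have hB0 : ∀ r : R, B 0 r = 0 := by
    intro r
    have h := hB.1 0 0 r
    rw [add_zero] at h
    exact left_eq_add.mp h
  have hbot : (⊥ : Ideal R) ∈ S := ⟨fun a ha r => by
    simp only [Submodule.mem_bot] at ha ⊢; rw [ha, hB0], bot_le⟩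
  have hdir : DirectedOn (· ≤ ·) S := by
    rintro I hI J hJ
    refine ⟨I ⊔ J, ⟨?_, sup_le hI.2 hJ.2⟩, le_sup_left, le_sup_right⟩
    intro a ha r
    rw [Submodule.mem_sup] at ha ⊢
    obtain ⟨x, hx, y, hy, rfl⟩ := ha
    exact ⟨B x r, hI.1 x hx r, B y r, hJ.1 y hy r, (hB.1 x y r).symm⟩
  have hCP : ∀ a ∈ C, ∀ r : R, B a r ∈ C := by
    intro a ha r
    rw [hC] at ha ⊢
    obtain ⟨I, hIS, haI⟩ := (Submodule.mem_sSup_of_directed ⟨⊥, hbot⟩ hdir).mp ha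
    exact le_sSup hIS (hIS.1 a haI r)
  have hCM : C ≤ M := hC ▸ sSup_le fun I hI => hI.2
  have hlargest : ∀ I : Ideal R, (∀ a ∈ I, ∀ r : R, B a r ∈ I) → I ≤ M → I ≤ C :=
    fun I h1 h2 => hC ▸ le_sSup ⟨h1, h2⟩
  refine ⟨hCP, hCM, hlargest, ?_⟩
  intro hnoeth
  haveI := hM.isPrime
  -- build, for each `r`, the derivation `B · r`
  have hDer : ∀ r : R, ∃ D : Derivation k R R, ∀ a : R, D a = B a r := by
    intro r
    have h1 : B 1 r = 0 := by
      have h := hB.2.2.2.2 1 1 r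
      rw [one_mul, one_mul] at h
      exact left_eq_add.mp h
    exact ⟨{ toFun := fun a => B a r
             map_add' := fun a b => hB.1 a b r
             map_smul' := fun c a => by simpa using hBk c a r
             map_one_eq_zero' := h1
             leibniz' := fun a b => by
               simpa [smul_eq_mul] using hB.2.2.2.2 a b r }, fun a => rfl⟩
  -- the radical of `C` is a Poisson ideal contained in `M`, hence `C` is radical
  have hradP : ∀ a ∈ C.radical, ∀ r : R, B a r ∈ C.radical := by
    intro a ha r
    obtain ⟨D, hD⟩ := hDer r
    have := derivation_mem_radical k D C (fun x hx => by rw [hD]; exact hCP x hx r) a ha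
    rwa [hD] at this
  have hradM : C.radical ≤ M := by
    calc C.radical ≤ M.radical := Ideal.radical_mono hCM
    _ = M := hM.isPrime.radical
  have hCrad : C.radical = C :=
    le_antisymm (hlargest _ hradP hradM) Ideal.le_radical
  -- minimal primes over C
  have hTfin : C.minimalPrimes.Finite := by
    haveI : IsNoetherianRing (R ⧸ C) :=
      isNoetherianRing_of_surjective R (R ⧸ C) (Ideal.Quotient.mk C)
        Ideal.Quotient.mk_surjective
    rw [Ideal.minimalPrimes_eq_comap]
    exact (minimalPrimes.finite_of_isNoetherianRing (R ⧸ C)).image _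
  have hsInfT : sInf C.minimalPrimes = C := by
    rw [Ideal.sInf_minimalPrimes, hCrad]
  -- every minimal prime over C is a Poisson ideal
  have hQP : ∀ Q ∈ C.minimalPrimes, ∀ a ∈ Q, ∀ r : R, B a r ∈ Q := by
    intro Q hQ a ha r
    have hQp : Q.IsPrime := hQ.1.1
    have hfin' : (C.minimalPrimes \ {Q}).Finite := hTfin.diff
    have hnle : ¬ sInf (C.minimalPrimes \ {Q}) ≤ Q := by
      intro hle
      rw [← hfin'.coe_toFinset, ← Finset.inf_id_eq_sInf, hQp.inf_le'] at hle
      obtain ⟨Q', hQ'mem, hQ'le⟩ := hle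
      rw [Set.Finite.mem_toFinset] at hQ'mem
      have hQQ' : Q ≤ Q' := hQ.2 hQ'mem.1.1 hQ'le
      exact hQ'mem.2 (le_antisymm (id hQ'le) hQQ')
    obtain ⟨s, hsJ, hsQ⟩ := SetLike.not_le_iff_exists.mp hnle
    have hsa : s * a ∈ C := by
      rw [← hsInfT, Ideal.mem_sInf]
      intro P hP
      by_cases hPQ : P = Q
      · subst hPQ; exact P.mul_mem_left _ ha
      · exact P.mul_mem_right _ (Ideal.mem_sInf.mp hsJ ⟨hP, hPQ⟩)
    have h1 : B (s * a) r ∈ C := hCP _ hsa r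
    have h2 : s * B a r ∈ Q := by
      have : s * B a r = B (s * a) r - a * B s r := by
        rw [hB.2.2.2.2 s a r]; ring
      rw [this]
      exact sub_mem (hQ.1.2 h1) (Q.mul_mem_right _ ha)
    rcases hQp.mem_or_mem h2 with h | h
    · exact absurd h hsQ
    · exact h
  -- a minimal prime contained in M equals C
  obtain ⟨Q, hQ, hQM⟩ := Ideal.exists_minimalPrimes_le (I := C) (J := M) hCM
  have hQC : Q ≤ C := hlargest Q (hQP Q hQ) hQM
  have hCQ : C = Q := le_antisymm hQ.1.2 hQC
  rw [hCQ]
  exact hQ.1.1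
end
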